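/- Let r ≥ 2, n ≥ 2 and let α be a complex number such that α, 2α, ..., nα are all non-integers. Assuming the tensor decomposition rule V_β ⊗ V_α ≅ ⊕_{m=0}^{r-1} V_{β+α+(r-1)-2m} for generic β, the n-fold tensor power decomposes as V_α^{⊗n} ≅ ⊕_{m=0}^{(n-1)(r-1)} d_{n,m}^r · V_{nα+(n-1)(r-1)-2m}, where d_{n,m}^r = |E_{n,m}^r|. Formally: in the free ℤ-module on symbols [β] (β ∈ ℂ), define a bilinear product by [β]·[α] = Σ_{m=0}^{r-1} [β+α+(r-1)-2m]; then the n-th power of [α] equals Σ_{m=0}^{(n-1)(r-1)} d_{n,m}^r [nα+(n-1)(r-1)-2m]. -/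

import Mathlib

/-!
With `T = Σ_{m<r} [(r-1)-2m]` the recursion gives `[α]^n = [nα] · T^(n-1)`. Expanding the
product `T^(n-1)` yields one symbol `[(n-1)(r-1) - 2 Σ e_i]` for every tuple
`e ∈ [0, r-1]^(n-1)`, and grouping the tuples by their sum `m` produces the multiplicity
`d_{n,m}^r`.
-/

/-- `d_{n,m}^r` : the number of `(n-1)`-tuples of integers in `[0, r-1]` summing to `m`. -/
noncomputable def dcard (r n m : ℕ) : ℕ :=
  Nat.card {e : Fin (n - 1) → ℕ // (∀ i, e i ≤ r - 1) ∧ ∑ i, e i = m}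

open Finset AddMonoidAlgebra

theorem card_bounded_tuples_sum_eq (r k m : ℕ) (hr : 1 ≤ r) :
    Nat.card {e : Fin k → ℕ // (∀ i, e i ≤ r - 1) ∧ ∑ i, e i = m} =
      #{e ∈ Fintype.piFinset fun _ : Fin k => range r | ∑ i, e i = m} := by
  rw [← Nat.card_eq_finsetCard]
  refine Nat.card_congr (Equiv.subtypeEquivRight fun e => ?_)
  simp only [mem_filter, Fintype.mem_piFinset, mem_range, Nat.le_sub_one_iff_lt hr]

theorem eq_pow_mul_pow_pred_of_succ_eq {M : Type*} [CommMonoid M] {a t : M} {f : ℕ → M}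
    (h1 : f 1 = a) (hsucc : ∀ k, 1 ≤ k → f (k + 1) = f k * a * t) :
    ∀ k, 1 ≤ k → f k = a ^ k * t ^ (k - 1) := by
  refine Nat.le_induction (by simp [h1]) fun k hk ih => ?_
  obtain ⟨j, rfl⟩ : ∃ j, k = j + 1 := ⟨k - 1, by omega⟩
  rw [hsucc _ hk, ih, Nat.add_sub_cancel, Nat.add_sub_cancel, pow_succ a (j + 1), pow_succ t j]
  ac_rfl

theorem AddMonoidAlgebra.sum_single_one_pow {R G ι : Type*} [CommSemiring R]
    [AddCommMonoid G] (s : Finset ι) (g : ι → G) (N : ℕ) :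
    (∑ j ∈ s, single (g j) (1 : R)) ^ N =
      ∑ e ∈ Fintype.piFinset fun _ : Fin N => s, single (∑ i, g (e i)) 1 := by
  rw [← Fin.prod_const, prod_univ_sum]
  simp only [prod_single, prod_const_one]

theorem sum_le_mul_of_mem_piFinset_range {r k : ℕ} {e : Fin k → ℕ}
    (he : e ∈ Fintype.piFinset fun _ => range r) : ∑ i, e i ≤ k * (r - 1) := by
  simp only [Fintype.mem_piFinset, mem_range] at he
  simpa using Finset.sum_le_sum fun i (_ : i ∈ univ) => Nat.le_sub_one_of_lt (he i)

/-- The decomposition rule reads `[β]·[α] = [β + α] · tensorShift r`. -/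
noncomputable def tensorShift (r : ℕ) : AddMonoidAlgebra ℤ ℂ :=
  ∑ m ∈ range r, single ((r : ℂ) - 1 - 2 * (m : ℂ)) 1

theorem tensorShift_pow (r n : ℕ) (hr : 1 ≤ r) :
    tensorShift r ^ (n - 1) = ∑ m ∈ range ((n - 1) * (r - 1) + 1),
      (dcard r n m : ℤ) • single (((n - 1 : ℕ) : ℂ) * ((r : ℂ) - 1) - 2 * (m : ℂ)) 1 := by
  rw [tensorShift, sum_single_one_pow,
    ← sum_fiberwise_of_maps_to (g := fun e : Fin (n - 1) → ℕ => ∑ i, e i) fun e he =>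
      mem_range_succ_iff.2 (sum_le_mul_of_mem_piFinset_range he)]
  refine sum_congr rfl fun m _ => ?_
  rw [dcard, card_bounded_tuples_sum_eq _ _ _ hr, natCast_zsmul, ← sum_const]
  refine sum_congr rfl fun e he => ?_
  rw [← (mem_filter.1 he).2]
  push_cast
  simp only [sum_sub_distrib, sum_const, card_univ, Fintype.card_fin, mul_sum, nsmul_eq_mul]
  ring_nf

theorem tensor_power_decomposition_general (r n : ℕ) (hr : 2 ≤ r) (hn : 2 ≤ n) (α : ℂ)
    (T : AddMonoidAlgebra ℤ ℂ)
    (hT : T = ∑ m ∈ Finset.range r,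
      AddMonoidAlgebra.single ((r : ℂ) - 1 - 2 * (m : ℂ)) (1 : ℤ))
    (f : ℕ → AddMonoidAlgebra ℤ ℂ)
    (hf1 : f 1 = AddMonoidAlgebra.single α (1 : ℤ))
    (hfs : ∀ k, 1 ≤ k → f (k + 1) = f k * AddMonoidAlgebra.single α (1 : ℤ) * T) :
    f n = ∑ m ∈ Finset.range ((n - 1) * (r - 1) + 1),
      (dcard r n m : ℤ) •
        AddMonoidAlgebra.single
          ((n : ℂ) * α + ((n : ℂ) - 1) * ((r : ℂ) - 1) - 2 * (m : ℂ)) (1 : ℤ) := by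
  rw [eq_pow_mul_pow_pred_of_succ_eq hf1 hfs n (by omega), hT, ← tensorShift,
    tensorShift_pow r n (by omega), single_pow, mul_sum]
  refine sum_congr rfl fun m _ => ?_
  rw [mul_smul_comm, single_mul_single, Nat.cast_sub (by omega : 1 ≤ n), nsmul_eq_mul]
  congr 2
  · push_cast
    ring
  · rw [one_pow, one_mul]

/-- Grothendieck-ring shadow of `V_α^{⊗n}`: in the free `ℤ`-module on symbols `[β]`
(`β ∈ ℂ`) with product `[β]·[α] = Σ_{m<r} [β+α+(r-1)-2m]` (realized as
`x ·' y = x * y * T` in `AddMonoidAlgebra ℤ ℂ` with `T = Σ_{m<r} [(r-1)-2m]`),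
the `n`-th power of `[α]` equals `Σ_m d_{n,m}^r [nα+(n-1)(r-1)-2m]`,
provided `α, 2α, …, nα` are all non-integers. -/
theorem tensor_power_decomposition (r n : ℕ) (hr : 2 ≤ r) (hn : 2 ≤ n) (α : ℂ)
    (hgen : ∀ k : ℕ, 1 ≤ k → k ≤ n → ∀ z : ℤ, (k : ℂ) * α ≠ (z : ℂ))
    (T : AddMonoidAlgebra ℤ ℂ)
    (hT : T = ∑ m ∈ Finset.range r,
      AddMonoidAlgebra.single ((r : ℂ) - 1 - 2 * (m : ℂ)) (1 : ℤ))
    (f : ℕ → AddMonoidAlgebra ℤ ℂ)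
    (hf1 : f 1 = AddMonoidAlgebra.single α (1 : ℤ))
    (hfs : ∀ k, 1 ≤ k → f (k + 1) = f k * AddMonoidAlgebra.single α (1 : ℤ) * T) :
    f n = ∑ m ∈ Finset.range ((n - 1) * (r - 1) + 1),
      (dcard r n m : ℤ) •
        AddMonoidAlgebra.single
          ((n : ℂ) * α + ((n : ℂ) - 1) * ((r : ℂ) - 1) - 2 * (m : ℂ)) (1 : ℤ) :=
  tensor_power_decomposition_general r n hr hn α T hT f hf1 hfs
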